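/- arXiv:0811.3567 — 4 statements merged into one kernel-verified Lean document; each statement's English description precedes it below -/
import Mathlib

section
/- Let p be a prime, Γ = (Z_p)^n, and K a field of characteristic different from p containing a primitive p-th root of unity α. Then every commutation factor ε on Γ over K has the form ε(i,j) = α^{φ(i,j)} for a unique Z_p-bilinear form φ on (Z_p)^n; moreover φ is symmetric if p=2 and skew-symmetric (hence ε proper) if p ≥ 3. -/
/-!
Since `α` has prime order `p`, `c ↦ α ^ c.val` is an isomorphism of `ZMod p` onto the group of
`p`-th roots of unity of `K`. Every value `ε i j` is such a root, because `Γ` is killed by `p`, so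
taking discrete logarithms turns the bimultiplicative `ε` into a biadditive, hence `ZMod p`-bilinear,
form `φ`, unique by injectivity of the logarithm. The relation `ε i j * ε j i = 1` becomes
`φ i j + φ j i = 0`, which is symmetry when `p = 2` and forces `φ i i = 0` when `p` is odd.
-/

namespace IsPrimitiveRoot

variable {M : Type*} [CommMonoid M] {α : M} {p : ℕ}

theorem pow_val_add [NeZero p] (h : IsPrimitiveRoot α p) (a b : ZMod p) :
    α ^ (a + b).val = α ^ a.val * α ^ b.val := by
  have hmod := pow_mod_orderOf α (a.val + b.val)
  rwa [← h.eq_orderOf, ← ZMod.val_add, pow_add] at hmod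

theorem pow_val_injective [NeZero p] (h : IsPrimitiveRoot α p) :
    Function.Injective fun c : ZMod p => α ^ c.val :=
  fun a b hab => ZMod.val_injective p (h.pow_inj a.val_lt b.val_lt hab)

theorem eq_add_of_pow_val_eq_mul [NeZero p] (h : IsPrimitiveRoot α p) {a b c : ZMod p}
    (habc : α ^ c.val = α ^ a.val * α ^ b.val) : c = a + b :=
  h.pow_val_injective (habc.trans (h.pow_val_add a b).symm)

theorem exists_pow_val_eq {R : Type*} [CommRing R] [IsDomain R] [NeZero p] {α x : R}
    (h : IsPrimitiveRoot α p) (hx : x ^ p = 1) : ∃ c : ZMod p, α ^ c.val = x := by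
  obtain ⟨k, hk, rfl⟩ := h.eq_pow_of_pow_eq_one hx
  exact ⟨k, by rw [ZMod.val_cast_of_lt hk]⟩

end IsPrimitiveRoot

theorem pow_eq_one_of_map_add {p : ℕ} {V M : Type*} [AddCommGroup V] [Module (ZMod p) V] [Monoid M]
    {f : V → M} (h0 : f 0 = 1) (hadd : ∀ x y, f (x + y) = f x * f y) (x : V) : f x ^ p = 1 := by
  have hnsmul : ∀ m : ℕ, f (m • x) = f x ^ m := by
    intro m
    induction m with
    | zero => rw [zero_smul, h0, pow_zero]
    | succ m ih => rw [succ_nsmul, hadd, ih, pow_succ]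
  rw [← hnsmul, ZModModule.char_nsmul_eq_zero, h0]

theorem exists_bilinForm_of_biadditive {p : ℕ} {V : Type*} [AddCommGroup V] [Module (ZMod p) V]
    (f : V → V → ZMod p) (hl : ∀ i j k, f (i + j) k = f i k + f j k)
    (hr : ∀ i j k, f i (j + k) = f i j + f i k) :
    ∃ φ : LinearMap.BilinForm (ZMod p) V, ∀ i j, φ i j = f i j :=
  ⟨(AddMonoidHom.mk' (fun i => (AddMonoidHom.mk' (f i) (hr i)).toZModLinearMap p)
      fun i j => LinearMap.ext (hl i j)).toZModLinearMap p, fun _ _ => rfl⟩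

theorem ZMod.eq_zero_of_neg_eq_self {p : ℕ} (hp : Odd p) {a : ZMod p} (h : -a = a) : a = 0 :=
  (a.neg_eq_self_iff.mp h).resolve_right fun h2 =>
    Nat.not_even_iff_odd.mpr hp ⟨a.val, by omega⟩

theorem commutation_factor_on_zmod_pow_general {K : Type*} [Field K] (p : ℕ) [Fact p.Prime] (n : ℕ)
    (α : K) (hα : α ^ p = 1) (hα1 : α ≠ 1)
    (ε : (Fin n → ZMod p) → (Fin n → ZMod p) → K)
    (h1 : ∀ i j, ε i j * ε j i = 1)
    (h2 : ∀ i j k, ε i (j + k) = ε i j * ε i k)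
    (h3 : ∀ i j k, ε (i + j) k = ε i k * ε j k) :
    ∃ φ : LinearMap.BilinForm (ZMod p) (Fin n → ZMod p),
      (∀ i j, ε i j = α ^ (φ i j).val) ∧
      (∀ ψ : LinearMap.BilinForm (ZMod p) (Fin n → ZMod p),
        (∀ i j, ε i j = α ^ (ψ i j).val) → ψ = φ) ∧
      (p = 2 → ∀ i j, φ i j = φ j i) ∧
      (3 ≤ p → (∀ i j, φ i j = - φ j i) ∧ (∀ i, ε i i = 1)) := by
  have hprim : IsPrimitiveRoot α p := orderOf_eq_prime hα hα1 ▸ IsPrimitiveRoot.orderOf α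
  have hε0 : ∀ i, ε i 0 = 1 := fun i =>
    (mul_eq_left₀ (left_ne_zero_of_mul_eq_one (h1 i 0))).mp (by rw [← h2, add_zero])
  choose f hf using fun i j => hprim.exists_pow_val_eq (pow_eq_one_of_map_add (hε0 i) (h2 i) j)
  obtain ⟨φ, hφ⟩ := exists_bilinForm_of_biadditive f
    (fun i j k => hprim.eq_add_of_pow_val_eq_mul (by rw [hf, hf, hf, h3]))
    (fun i j k => hprim.eq_add_of_pow_val_eq_mul (by rw [hf, hf, hf, h2]))
  have hε : ∀ i j, ε i j = α ^ (φ i j).val := fun i j => by rw [hφ, hf]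
  have hskew : ∀ i j, φ i j = -φ j i := fun i j => eq_neg_of_add_eq_zero_left
    (hprim.eq_add_of_pow_val_eq_mul (by rw [← hε, ← hε, h1, ZMod.val_zero, pow_zero])).symm
  refine ⟨φ, hε, fun ψ hψ => LinearMap.ext₂ fun i j => hprim.pow_val_injective
    ((hψ i j).symm.trans (hε i j)), ?_, fun hp => ⟨hskew, fun i => ?_⟩⟩
  · rintro rfl i j
    rw [hskew, ZMod.neg_eq_self_mod_two]
  · have hodd : Odd p := (Fact.out : p.Prime).odd_of_ne_two (by omega)
    rw [hε, ZMod.eq_zero_of_neg_eq_self hodd (hskew i i).symm, ZMod.val_zero, pow_zero]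

/-- commutation factors on `(ℤ_p)^n` over a field of characteristic `≠ p`
containing a primitive `p`-th root of unity `α` are exactly `α^{φ(i,j)}` for a unique
`ℤ_p`-bilinear form `φ`, symmetric when `p = 2`, skew-symmetric (and `ε` proper) when `p ≥ 3`. -/
theorem commutation_factor_on_zmod_pow {K : Type*} [Field K] (p : ℕ) [Fact p.Prime] (n : ℕ)
    (hchar : ringChar K ≠ p)
    (α : K) (hα : α ^ p = 1) (hα1 : α ≠ 1)
    (ε : (Fin n → ZMod p) → (Fin n → ZMod p) → K)
    (h1 : ∀ i j, ε i j * ε j i = 1)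
    (h2 : ∀ i j k, ε i (j + k) = ε i j * ε i k)
    (h3 : ∀ i j k, ε (i + j) k = ε i k * ε j k) :
    ∃ φ : LinearMap.BilinForm (ZMod p) (Fin n → ZMod p),
      (∀ i j, ε i j = α ^ (φ i j).val) ∧
      (∀ ψ : LinearMap.BilinForm (ZMod p) (Fin n → ZMod p),
        (∀ i j, ε i j = α ^ (ψ i j).val) → ψ = φ) ∧
      (p = 2 → ∀ i j, φ i j = φ j i) ∧
      (3 ≤ p → (∀ i j, φ i j = - φ j i) ∧ (∀ i, ε i i = 1)) :=
  commutation_factor_on_zmod_pow_general p n α hα hα1 ε h1 h2 h3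
end

section
/- Let A = M_D(ℂ) be the complex D×D matrix algebra with an elementary Γ-grading given by a map φ: {1,…,D} → Γ (so the matrix unit E_ij has degree φ(i)-φ(j)), and ε a commutation factor on Γ. Then the ε-center of A is trivial: Z_ε(A) = ℂ·1. -/
/-!
A homogeneous `a` of degree `α` that `ε`-commutes with the degree-zero matrix units `E k k` has
no off-diagonal entries. If `α ≠ 0` its diagonal vanishes too, so `a = 0`. If `α = 0`, then
`ε 0 β = 1` turns `ε`-commutation into ordinary commutation with every matrix unit, and a matrix
commuting with all matrix units is scalar.
-/

/-- The homogeneous component of degree `α` of the elementary `Γ`-grading on `M_D(ℂ)`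
induced by `φ : Fin D → Γ`: matrix units `E i j` have degree `φ i - φ j`. -/
noncomputable def elemGrading {Γ : Type*} [AddCommGroup Γ] {D : ℕ} (φ : Fin D → Γ) (α : Γ) :
    Submodule ℂ (Matrix (Fin D) (Fin D) ℂ) where
  carrier := {M | ∀ i j, φ i - φ j ≠ α → M i j = 0}
  add_mem' := by
    intro a b ha hb i j h
    simp [Matrix.add_apply, ha i j h, hb i j h]
  zero_mem' := by intro i j _; rfl
  smul_mem' := by
    intro c a ha i j h
    simp [Matrix.smul_apply, ha i j h]

theorem eps_zero_left {Γ K : Type*} [AddCommGroup Γ] [CommMonoid K] {ε : Γ → Γ → K}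
    (h1 : ∀ i j, ε i j * ε j i = 1) (h3 : ∀ i j k, ε (i + j) k = ε i k * ε j k) (β : Γ) :
    ε 0 β = 1 := by
  have hunit : IsUnit (ε 0 β) := IsUnit.of_mul_eq_one _ (h1 0 β)
  rw [← hunit.mul_eq_left, ← h3, add_zero]

theorem Matrix.apply_eq_zero_of_mul_single_eq_smul {n R : Type*} [Fintype n] [DecidableEq n]
    [Semiring R] {M : Matrix n n R} {c : R} {i k : n} (hik : i ≠ k)
    (hM : M * single k k 1 = c • (single k k 1 * M)) : M i k = 0 := by
  simpa [hik] using congr_fun₂ hM i k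

section EpsCenter

variable {Γ : Type*} [AddCommGroup Γ] {D : ℕ} {φ : Fin D → Γ}

theorem single_mem_elemGrading (k l : Fin D) (c : ℂ) :
    Matrix.single k l c ∈ elemGrading φ (φ k - φ l) := by
  rintro i j hij
  by_cases hik : i = k
  · by_cases hjl : j = l
    · subst hik hjl; exact absurd rfl hij
    · simp [Matrix.single_apply_of_col_ne _ _ (Ne.symm hjl)]
  · simp [Matrix.single_apply_of_row_ne (Ne.symm hik)]

theorem diag_eq_zero_of_mem_elemGrading {α : Γ} {a : Matrix (Fin D) (Fin D) ℂ}
    (ha : a ∈ elemGrading φ α) (hα : α ≠ 0) (i : Fin D) : a i i = 0 :=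
  ha i i (by rwa [sub_self, ne_comm])

/-- `a` lies in the `ε`-center `Z_ε` as an element of degree `α`. -/
def IsEpsCentral (φ : Fin D → Γ) (ε : Γ → Γ → ℂ) (α : Γ) (a : Matrix (Fin D) (Fin D) ℂ) :
    Prop :=
  ∀ β, ∀ b ∈ elemGrading φ β, a * b = ε α β • (b * a)

variable {ε : Γ → Γ → ℂ} {α : Γ} {a : Matrix (Fin D) (Fin D) ℂ}

theorem IsEpsCentral.apply_eq_zero_of_ne (h : IsEpsCentral φ ε α a) {i k : Fin D}
    (hik : i ≠ k) : a i k = 0 :=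
  Matrix.apply_eq_zero_of_mul_single_eq_smul hik (h _ _ (single_mem_elemGrading k k 1))

theorem IsEpsCentral.eq_zero (h : IsEpsCentral φ ε α a) (ha : a ∈ elemGrading φ α)
    (hα : α ≠ 0) : a = 0 := by
  ext i k
  obtain rfl | hik := eq_or_ne i k
  · exact diag_eq_zero_of_mem_elemGrading ha hα i
  · exact h.apply_eq_zero_of_ne hik

theorem IsEpsCentral.mem_range_scalar (h : IsEpsCentral φ ε 0 a) (hε : ∀ β, ε 0 β = 1) :
    a ∈ Set.range (Matrix.scalar (Fin D)) :=
  Matrix.mem_range_scalar_iff_commute_single'.mpr fun k l ↦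
    (by simpa only [hε, one_smul] using h _ _ (single_mem_elemGrading k l 1) : _ = _).symm

end EpsCenter

theorem elemGrading_epsCenter_trivial_general {Γ : Type*} [AddCommGroup Γ] {D : ℕ}
    (φ : Fin D → Γ) (ε : Γ → Γ → ℂ)
    (h1 : ∀ i j, ε i j * ε j i = 1)
    (h3 : ∀ i j k, ε (i + j) k = ε i k * ε j k) :
    (∀ α, ∀ a ∈ elemGrading φ α,
      (∀ β, ∀ b ∈ elemGrading φ β, a * b = ε α β • (b * a)) →
      ∃ c : ℂ, a = c • (1 : Matrix (Fin D) (Fin D) ℂ)) ∧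
    (∀ c : ℂ, ∀ β, ∀ b ∈ elemGrading φ β,
      (c • (1 : Matrix (Fin D) (Fin D) ℂ)) * b
        = ε 0 β • (b * (c • (1 : Matrix (Fin D) (Fin D) ℂ)))) := by
  have hε : ∀ β, ε 0 β = 1 := eps_zero_left h1 h3
  refine ⟨fun α a ha hcentral ↦ ?_, fun c β b _ ↦ by simp [hε]⟩
  obtain rfl | hα := eq_or_ne α 0
  · obtain ⟨c, rfl⟩ := IsEpsCentral.mem_range_scalar hcentral hε
    exact ⟨c, by rw [Matrix.scalar_apply, Matrix.smul_one_eq_diagonal]⟩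
  · exact ⟨0, by rw [IsEpsCentral.eq_zero hcentral ha hα, zero_smul]⟩

/-- the ε-center of a matrix algebra with elementary grading is `ℂ·1`. -/
theorem elemGrading_epsCenter_trivial {Γ : Type*} [AddCommGroup Γ] {D : ℕ}
    (φ : Fin D → Γ) (ε : Γ → Γ → ℂ)
    (h1 : ∀ i j, ε i j * ε j i = 1)
    (h2 : ∀ i j k, ε i (j + k) = ε i j * ε i k)
    (h3 : ∀ i j k, ε (i + j) k = ε i k * ε j k) :
    (∀ α, ∀ a ∈ elemGrading φ α,
      (∀ β, ∀ b ∈ elemGrading φ β, a * b = ε α β • (b * a)) →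
      ∃ c : ℂ, a = c • (1 : Matrix (Fin D) (Fin D) ℂ)) ∧
    (∀ c : ℂ, ∀ β, ∀ b ∈ elemGrading φ β,
      (c • (1 : Matrix (Fin D) (Fin D) ℂ)) * b
        = ε 0 β • (b * (c • (1 : Matrix (Fin D) (Fin D) ℂ)))) :=
  elemGrading_epsCenter_trivial_general φ ε h1 h3
end

section
/- Let A = M_D(ℂ) with an elementary Γ-grading and commutation factor ε. Then every homogeneous ε-derivation of A is inner: for each homogeneous ε-derivation X there exists M ∈ A (namely M = Σ_k X(E_{ka})E_{ak} for any fixed a) such that X(b) = [M,b]_ε for all b ∈ A. Hence Out_ε(A) = 0. -/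
/-- `X` is a homogeneous ε-derivation of degree `g` for the elementary grading. -/
def IsEpsDerivation {Γ : Type*} [AddCommGroup Γ] {D : ℕ} (φ : Fin D → Γ)
    (ε : Γ → Γ → ℂ) (g : Γ)
    (X : Matrix (Fin D) (Fin D) ℂ →ₗ[ℂ] Matrix (Fin D) (Fin D) ℂ) : Prop :=
  (∀ i, ∀ a ∈ elemGrading φ i, X a ∈ elemGrading φ (g + i)) ∧
  (∀ i, ∀ a ∈ elemGrading φ i, ∀ b, X (a * b) = X a * b + ε g i • (a * X b))

/-!
Put `M = ∑ₖ X(E_{ka}) E_{ak}`. By linearity of `X`, `M b = ∑ₖ X(b E_{ka}) E_{ak}` (both sides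
are additive in `b`, and agree on matrix units). Expanding `X(b E_{ka})` by the Leibniz rule gives
`M b = X(b) ∑ₖ E_{kk} + ε(|X|, |b|) b M = X(b) + ε(|X|, |b|) b M`.
-/

namespace Matrix

variable {l n R : Type*} [Fintype n] [DecidableEq n] [CommSemiring R]

theorem sum_map_single_mul_single_mul (f : Matrix n n R →ₗ[R] Matrix l n R) (a : n)
    (b : Matrix n n R) :
    (∑ k, f (single k a (1 : R)) * single a k (1 : R)) * b =
      ∑ k, f (b * single k a (1 : R)) * single a k (1 : R) := by
  induction b using Matrix.induction_on' with
  | h_zero => simp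
  | h_add p q hp hq =>
    simp only [Matrix.mul_add, Matrix.add_mul, map_add, Finset.sum_add_distrib, hp, hq]
  | h_std_basis i j x =>
    rw [Matrix.sum_mul, Finset.sum_eq_single i, Finset.sum_eq_single j]
    · have hx (p q : n) : single p q x = x • single p q (1 : R) := by simp [smul_single]
      rw [Matrix.mul_assoc, single_mul_single_same, single_mul_single_same, one_mul, mul_one,
        hx a j, hx i a, map_smul, Matrix.mul_smul, Matrix.smul_mul]
    · intro k _ hk
      rw [single_mul_single_of_ne _ _ _ _ (Ne.symm hk), map_zero, Matrix.zero_mul]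
    · simp
    · intro k _ hk
      rw [Matrix.mul_assoc, single_mul_single_of_ne _ _ _ _ hk, Matrix.mul_zero]
    · simp

theorem sum_map_single_mul_single_mul_of_leibniz {f : Matrix n n R →ₗ[R] Matrix n n R}
    {b : Matrix n n R} {c : R} (hf : ∀ x, f (b * x) = f b * x + c • (b * f x)) (a : n) :
    (∑ k, f (single k a (1 : R)) * single a k (1 : R)) * b =
      f b + c • (b * ∑ k, f (single k a (1 : R)) * single a k (1 : R)) := by
  simp only [sum_map_single_mul_single_mul, hf, add_mul, mul_assoc, single_mul_single_same,
    mul_one, Finset.sum_add_distrib, ← Finset.mul_sum, sum_single_one, smul_mul_assoc,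
    ← Finset.smul_sum]

end Matrix

theorem elemGrading_epsDerivation_inner_general {Γ : Type*} [AddCommGroup Γ] {D : ℕ}
    (φ : Fin D → Γ) (ε : Γ → Γ → ℂ)
    (g : Γ) (X : Matrix (Fin D) (Fin D) ℂ →ₗ[ℂ] Matrix (Fin D) (Fin D) ℂ)
    (hX : IsEpsDerivation φ ε g X) :
    ∀ a : Fin D,
      let M : Matrix (Fin D) (Fin D) ℂ :=
        ∑ k, X (Matrix.single k a 1) * Matrix.single a k 1
      ∀ β, ∀ b ∈ elemGrading φ β, X b = M * b - ε g β • (b * M) := by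
  intro a M β b hb
  exact eq_sub_of_add_eq (Matrix.sum_map_single_mul_single_mul_of_leibniz (hX.2 β b hb) a).symm

/-- every homogeneous ε-derivation of an elementary ε-graded matrix
algebra is inner, generated by `M = Σ_k X(E_{ka}) E_{ak}` for any fixed index `a`. -/
theorem elemGrading_epsDerivation_inner {Γ : Type*} [AddCommGroup Γ] {D : ℕ}
    (hD : 0 < D) (φ : Fin D → Γ) (ε : Γ → Γ → ℂ)
    (h1 : ∀ i j, ε i j * ε j i = 1)
    (h2 : ∀ i j k, ε i (j + k) = ε i j * ε i k)
    (h3 : ∀ i j k, ε (i + j) k = ε i k * ε j k)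
    (g : Γ) (X : Matrix (Fin D) (Fin D) ℂ →ₗ[ℂ] Matrix (Fin D) (Fin D) ℂ)
    (hX : IsEpsDerivation φ ε g X) :
    ∀ a : Fin D,
      let M : Matrix (Fin D) (Fin D) ℂ :=
        ∑ k, X (Matrix.single k a 1) * Matrix.single a k 1
      ∀ β, ∀ b ∈ elemGrading φ β, X b = M * b - ε g β • (b * M) :=
  elemGrading_epsDerivation_inner_general φ ε g X hX
end

section
/- Let A be a fine Γ-graded matrix algebra with homogeneous basis (e_α)_{α ∈ Supp(A)} and factor set σ defined by e_α e_β = σ(α,β) e_{α+β}, and let ε be any commutation factor on Γ. Then the ε-center of A is Z_ε(A) = ⊕_{α ∈ Γ_{ε,ε_σ}} A^α, where Γ_{ε,ε_σ} = {i ∈ Γ : ε(i,j) = ε_σ(i,j) for all j ∈ Γ} and ε_σ(i,j) = σ(i,j)σ(j,i)⁻¹. -/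
/-!
Since `𝒜 0 = ℂ • 1` and the matrix algebra is simple, every nonzero homogeneous element is
invertible: otherwise all its homogeneous sandwiches `u * x * v` of degree `0` vanish, so the
two-sided ideal generated by `x` lies in the kernel of the degree-`0` projection, which does not
contain `1`. Hence `e α * e β = σ α β • e (α + β)` is nonzero, and for `a = c • e α` the relation
`a * e β = ε α β • (e β * a)` compares two multiples of the nonzero vector `e (α + β)`.
-/

open DirectSum

theorem Submodule.exists_smul_eq_of_rank_le_one {K V : Type*} [DivisionRing K] [AddCommGroup V]
    [Module K V] {p : Submodule K V} (hp : Module.rank K p ≤ 1) {x y : V} (hx : x ∈ p)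
    (hx0 : x ≠ 0) (hy : y ∈ p) : ∃ c : K, c • x = y := by
  have hx0' : (⟨x, hx⟩ : p) ≠ 0 := by simpa using hx0
  have : Nontrivial p := nontrivial_of_ne _ 0 hx0'
  have hp1 : Module.finrank K p = 1 :=
    Module.finrank_eq_of_rank_eq (le_antisymm hp (Cardinal.one_le_iff_pos.mpr rank_pos))
  obtain ⟨c, hc⟩ := exists_smul_eq_of_finrank_eq_one hp1 hx0' ⟨y, hy⟩
  exact ⟨c, congrArg Subtype.val hc⟩

theorem forall_mem_mul_eq_smul_mul_iff {K A : Type*} [Field K] [Ring A] [Algebra K A]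
    {p : Submodule K A} (hp : Module.rank K p ≤ 1) {x : A} (hx : x ∈ p) (hx0 : x ≠ 0)
    (a : A) (t : K) : (∀ b ∈ p, a * b = t • (b * a)) ↔ a * x = t • (x * a) := by
  refine ⟨fun h => h x hx, fun h b hb => ?_⟩
  obtain ⟨d, rfl⟩ := p.exists_smul_eq_of_rank_le_one hp hx hx0 hb
  rw [mul_smul_comm, h, smul_mul_assoc, smul_comm]

theorem smul_mul_eq_smul_mul_iff_eq_mul_inv {K A : Type*} [Field K] [Ring A] [Algebra K A]
    {x y z : A} {s s' c t : K} (hz : z ≠ 0) (hc : c ≠ 0) (hs' : s' ≠ 0)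
    (hxy : x * y = s • z) (hyx : y * x = s' • z) :
    c • x * y = t • (y * c • x) ↔ t = s * s'⁻¹ := by
  rw [smul_mul_assoc, mul_smul_comm, hxy, hyx, smul_smul, smul_smul, smul_smul,
    (smul_left_injective K hz).eq_iff, eq_mul_inv_iff_mul_eq₀ hs']
  exact ⟨fun h => mul_left_cancel₀ hc (by linear_combination -h),
    fun h => by linear_combination -c * h⟩

section GradedRing

variable {ι A σ : Type*} [AddMonoid ι] [DecidableEq ι] [Ring A] [SetLike σ A]
  [AddSubgroupClass σ A] (𝒜 : ι → σ) [GradedRing 𝒜]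

theorem GradedRing.proj_zero_mul_mul_eq_zero {γ : ι} {x : A} (hx : x ∈ 𝒜 γ)
    (h : ∀ μ ν (u v : A), u ∈ 𝒜 μ → v ∈ 𝒜 ν → μ + γ + ν = 0 → u * x * v = 0) (u v : A) :
    GradedRing.proj 𝒜 0 (u * x * v) = 0 := by
  classical
  rw [← sum_support_decompose 𝒜 u, ← sum_support_decompose 𝒜 v, Finset.sum_mul,
    Finset.sum_mul_sum, map_sum]
  refine Finset.sum_eq_zero fun μ _ => ?_
  rw [map_sum]
  refine Finset.sum_eq_zero fun ν _ => ?_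
  by_cases h0 : μ + γ + ν = 0
  · rw [h μ ν _ _ (SetLike.coe_mem _) (SetLike.coe_mem _) h0, map_zero]
  · exact decompose_of_mem_ne 𝒜 (SetLike.mul_mem_graded
      (SetLike.mul_mem_graded (SetLike.coe_mem _) hx) (SetLike.coe_mem _)) h0

theorem GradedRing.exists_mul_mul_ne_zero [IsSimpleRing A] {γ : ι} {x : A} (hx : x ∈ 𝒜 γ)
    (hx0 : x ≠ 0) :
    ∃ (μ ν : ι) (u v : A), u ∈ 𝒜 μ ∧ v ∈ 𝒜 ν ∧ μ + γ + ν = 0 ∧ u * x * v ≠ 0 := by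
  by_contra! h
  let I : TwoSidedIdeal A := .mk' {y | ∀ u v, GradedRing.proj 𝒜 0 (u * y * v) = 0}
    (fun u v => by rw [mul_zero, zero_mul, map_zero])
    (fun hy hz u v => by rw [mul_add, add_mul, map_add, hy u v, hz u v, add_zero])
    (fun hy u v => by rw [mul_neg, neg_mul, map_neg, hy u v, neg_zero])
    (fun {a _} hy u v => by simpa [mul_assoc] using hy (u * a) v)
    (fun {_ b} hy u v => by simpa [mul_assoc] using hy u (b * v))
  have hxI : x ∈ I :=
    (TwoSidedIdeal.mem_mk' ..).mpr (GradedRing.proj_zero_mul_mul_eq_zero 𝒜 hx h)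
  have h1 := IsSimpleRing.one_mem_of_ne_zero_mem I hx0 hxI
  rw [TwoSidedIdeal.mem_mk'] at h1
  have h10 := h1 1 1
  rw [mul_one, mul_one, GradedRing.proj_apply,
    decompose_of_mem_same 𝒜 (SetLike.one_mem_graded 𝒜)] at h10
  exact one_ne_zero h10

end GradedRing

theorem GradedAlgebra.isUnit_of_mem {ι K A : Type*} [AddMonoid ι] [DecidableEq ι] [Field K]
    [Ring A] [Algebra K A] [IsSimpleRing A] [IsDedekindFiniteMonoid A]
    (𝒜 : ι → Submodule K A) [GradedAlgebra 𝒜] (h0 : Module.rank K (𝒜 0) ≤ 1) {γ : ι} {x : A}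
    (hx : x ∈ 𝒜 γ) (hx0 : x ≠ 0) : IsUnit x := by
  obtain ⟨μ, ν, u, v, hu, hv, hsum, hne⟩ := GradedRing.exists_mul_mul_ne_zero 𝒜 hx hx0
  have hmem : u * x * v ∈ 𝒜 0 :=
    hsum ▸ SetLike.mul_mem_graded (SetLike.mul_mem_graded hu hx) hv
  obtain ⟨c, hc⟩ := (𝒜 0).exists_smul_eq_of_rank_le_one h0 (SetLike.one_mem_graded 𝒜)
    one_ne_zero hmem
  have hc0 : c ≠ 0 := by rintro rfl; exact hne (by simp [← hc])
  have hunit : IsUnit (u * x * v) := by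
    rw [← hc, ← Algebra.algebraMap_eq_smul_one]
    exact (IsUnit.mk0 c hc0).map (algebraMap K A)
  exact isUnit_of_mul_isUnit_right (isUnit_of_mul_isUnit_left hunit)

theorem fineGrading_epsCenter_general {Γ : Type*} [AddCommGroup Γ] [DecidableEq Γ] {D : ℕ}
    (𝒜 : Γ → Submodule ℂ (Matrix (Fin D) (Fin D) ℂ)) [GradedAlgebra 𝒜]
    (hfine : ∀ α, Module.rank ℂ (𝒜 α) ≤ 1)
    (e : Γ → Matrix (Fin D) (Fin D) ℂ) (σ : Γ → Γ → ℂ)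
    (he : ∀ α, 𝒜 α ≠ ⊥ → e α ∈ 𝒜 α ∧ e α ≠ 0)
    (hmul : ∀ α β, 𝒜 α ≠ ⊥ → 𝒜 β ≠ ⊥ → e α * e β = σ α β • e (α + β))
    (hσ : ∀ α β, 𝒜 α ≠ ⊥ → 𝒜 β ≠ ⊥ → σ α β ≠ 0)
    (ε : Γ → Γ → ℂ) :
    ∀ α, 𝒜 α ≠ ⊥ → ∀ a ∈ 𝒜 α, a ≠ 0 →
      ((∀ β, ∀ b ∈ 𝒜 β, a * b = ε α β • (b * a)) ↔
        (∀ β, 𝒜 β ≠ ⊥ → ε α β = σ α β * (σ β α)⁻¹)) := by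
  intro α hα a ha ha0
  obtain ⟨heα, heα0⟩ := he α hα
  obtain ⟨c, rfl⟩ := (𝒜 α).exists_smul_eq_of_rank_le_one (hfine α) heα heα0 ha
  have hc : c ≠ 0 := by rintro rfl; exact ha0 (zero_smul ℂ _)
  have : Nonempty (Fin D) := not_isEmpty_iff.mp fun _ => heα0 (Subsingleton.elim _ _)
  have key : ∀ β, 𝒜 β ≠ ⊥ → ((∀ b ∈ 𝒜 β, c • e α * b = ε α β • (b * c • e α)) ↔
      ε α β = σ α β * (σ β α)⁻¹) := by
    intro β hβ
    obtain ⟨heβ, heβ0⟩ := he β hβ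
    have hne : e (α + β) ≠ 0 := fun h0 =>
      ((GradedAlgebra.isUnit_of_mem 𝒜 (hfine 0) heα heα0).mul
        (GradedAlgebra.isUnit_of_mem 𝒜 (hfine 0) heβ heβ0)).ne_zero
        (by rw [hmul α β hα hβ, h0, smul_zero])
    rw [forall_mem_mul_eq_smul_mul_iff (hfine β) heβ heβ0]
    exact smul_mul_eq_smul_mul_iff_eq_mul_inv hne hc (hσ β α hβ hα) (hmul α β hα hβ)
      (add_comm β α ▸ hmul β α hβ hα)
  refine ⟨fun h β hβ => (key β hβ).1 (h β), fun h β b hb => ?_⟩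
  by_cases hβ : 𝒜 β = ⊥
  · rw [hβ, Submodule.mem_bot] at hb
    rw [hb, mul_zero, zero_mul, smul_zero]
  · exact (key β hβ).2 (h β hβ) b hb

/-- for a fine graded matrix algebra with homogeneous basis `e` and
factor set `σ` (`e_α e_β = σ(α,β) e_{α+β}`), a nonzero homogeneous element of degree
`α` is in the ε-center iff `ε(α,β) = ε_σ(α,β) = σ(α,β) σ(β,α)⁻¹` for all `β` in the
support. -/
theorem fineGrading_epsCenter {Γ : Type*} [AddCommGroup Γ] [DecidableEq Γ] {D : ℕ}
    (𝒜 : Γ → Submodule ℂ (Matrix (Fin D) (Fin D) ℂ)) [GradedAlgebra 𝒜]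
    (hfine : ∀ α, Module.rank ℂ (𝒜 α) ≤ 1)
    (e : Γ → Matrix (Fin D) (Fin D) ℂ) (σ : Γ → Γ → ℂ)
    (he : ∀ α, 𝒜 α ≠ ⊥ → e α ∈ 𝒜 α ∧ e α ≠ 0)
    (hmul : ∀ α β, 𝒜 α ≠ ⊥ → 𝒜 β ≠ ⊥ → e α * e β = σ α β • e (α + β))
    (hσ : ∀ α β, 𝒜 α ≠ ⊥ → 𝒜 β ≠ ⊥ → σ α β ≠ 0)
    (ε : Γ → Γ → ℂ)
    (h1 : ∀ i j, ε i j * ε j i = 1)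
    (h2 : ∀ i j k, ε i (j + k) = ε i j * ε i k)
    (h3 : ∀ i j k, ε (i + j) k = ε i k * ε j k) :
    ∀ α, 𝒜 α ≠ ⊥ → ∀ a ∈ 𝒜 α, a ≠ 0 →
      ((∀ β, ∀ b ∈ 𝒜 β, a * b = ε α β • (b * a)) ↔
        (∀ β, 𝒜 β ≠ ⊥ → ε α β = σ α β * (σ β α)⁻¹)) :=
  fineGrading_epsCenter_general 𝒜 hfine e σ he hmul hσ ε
end
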